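/- Let E and F be Kolmogorov spaces over an ordered set B, with restriction maps e and f. Under the diagonal-restriction correspondence between horizontal families (u_{st} : E_t → F_s)_{s ≤ t} (satisfying f_{s′s} ∘ u_{st} ∘ e_{tt′} = u_{s′t′} for s′ ≤ s ≤ t ≤ t′) and morphisms (u_t : E_t → F_t)_t (satisfying f_{st} ∘ u_t = u_s ∘ e_{st}), the supremum of operator norms is preserved: sup_{s ≤ t} ‖u_{st}‖ = sup_{t} ‖u_{tt}‖. In particular, bounded horizontal sections of the external Hom over the closed subdiagonal correspond isometrically to bounded morphisms: Γ^∞(Δ̄, 𝓗om(E,F)) ≅ Hom_B^b(E,F). -/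

import Mathlib

/-! Horizontality with `s' = s ≤ t = t = t'` gives `u_{st} = f_{st} ∘ u_{tt}`, and restriction
maps are contractions, so `‖u_{st}‖ ≤ ‖u_{tt}‖`; the diagonal terms belong to the family. -/

open scoped ENNReal

/-- A Kolmogorov space over an ordered set `B`: a family of real Banach spaces `(E b)`
with continuous linear restriction maps `res : E t →L E s` for `s ≤ t`, satisfying the
identity and composition laws, all of operator norm at most one. -/
structure KolmogorovSpace (B : Type*) [PartialOrder B] (E : B → Type*)
    [∀ b, NormedAddCommGroup (E b)] [∀ b, NormedSpace ℝ (E b)]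
    [∀ b, CompleteSpace (E b)] where
  res : ∀ {s t : B}, s ≤ t → (E t →L[ℝ] E s)
  res_id : ∀ t : B, res (le_refl t) = ContinuousLinearMap.id ℝ (E t)
  res_comp : ∀ {u s t : B} (h₁ : u ≤ s) (h₂ : s ≤ t),
    (res h₁).comp (res h₂) = res (h₁.trans h₂)
  res_norm : ∀ {s t : B} (h : s ≤ t) (x : E t), ‖res h x‖ ≤ ‖x‖

section

variable {B : Type*} [PartialOrder B] {E F : B → Type*}
  [∀ b, NormedAddCommGroup (E b)] [∀ b, NormedSpace ℝ (E b)] [∀ b, CompleteSpace (E b)]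
  [∀ b, NormedAddCommGroup (F b)] [∀ b, NormedSpace ℝ (F b)] [∀ b, CompleteSpace (F b)]

/-- A family `(u_{st} : E_t → F_s)_{s ≤ t}` is horizontal (i.e. a horizontal section of
the external Hom over the closed subdiagonal `Δ̄ = {(s,t) : s ≤ t}`) if
`f_{s's} ∘ u_{st} ∘ e_{tt'} = u_{s't'}` whenever `s' ≤ s ≤ t ≤ t'`. -/
def HorizontalFamily (KE : KolmogorovSpace B E) (KF : KolmogorovSpace B F)
    (U : ∀ s t : B, s ≤ t → (E t →L[ℝ] F s)) : Prop :=
  ∀ (s' s t t' : B) (h₁ : s' ≤ s) (h₂ : s ≤ t) (h₃ : t ≤ t'),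
    (KF.res h₁).comp ((U s t h₂).comp (KE.res h₃)) = U s' t' ((h₁.trans h₂).trans h₃)

namespace KolmogorovSpace

theorem norm_res_le (K : KolmogorovSpace B E) {s t : B} (h : s ≤ t) : ‖K.res h‖ ≤ 1 :=
  ContinuousLinearMap.opNorm_le_bound _ zero_le_one fun x => by
    simpa only [one_mul] using K.res_norm h x

end KolmogorovSpace

namespace HorizontalFamily

variable {KE : KolmogorovSpace B E} {KF : KolmogorovSpace B F}
  {U : ∀ s t : B, s ≤ t → (E t →L[ℝ] F s)}

theorem norm_le_of_le (hU : HorizontalFamily KE KF U) {s' s t t' : B}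
    (h₁ : s' ≤ s) (h₂ : s ≤ t) (h₃ : t ≤ t') :
    ‖U s' t' ((h₁.trans h₂).trans h₃)‖ ≤ ‖U s t h₂‖ := by
  rw [← hU s' s t t' h₁ h₂ h₃]
  calc ‖(KF.res h₁).comp ((U s t h₂).comp (KE.res h₃))‖
      ≤ ‖KF.res h₁‖ * (‖U s t h₂‖ * ‖KE.res h₃‖) :=
        (ContinuousLinearMap.opNorm_comp_le _ _).trans <|
          mul_le_mul_of_nonneg_left (ContinuousLinearMap.opNorm_comp_le _ _) (norm_nonneg _)
    _ ≤ 1 * (‖U s t h₂‖ * 1) := by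
        gcongr
        exacts [KF.norm_res_le h₁, KE.norm_res_le h₃]
    _ = ‖U s t h₂‖ := by ring

theorem norm_le_norm_diag (hU : HorizontalFamily KE KF U) {s t : B} (h : s ≤ t) :
    ‖U s t h‖ ≤ ‖U t t le_rfl‖ :=
  hU.norm_le_of_le h le_rfl le_rfl

end HorizontalFamily

/-- Under the diagonal-restriction correspondence between horizontal
families `(u_{st})_{s≤t}` and morphisms `(u_t)_t`, the supremum of operator norms is
preserved: `sup_{s ≤ t} ‖u_{st}‖ = sup_t ‖u_{tt}‖` (computed in `[0,∞]`).  In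
particular, bounded horizontal sections of the external Hom over the closed subdiagonal
correspond isometrically to bounded morphisms: `Γ^∞(Δ̄, 𝓗om(E,F)) ≅ Hom_B^b(E,F)`. -/
theorem horizontal_family_sup_norm_eq_diagonal (KE : KolmogorovSpace B E)
    (KF : KolmogorovSpace B F)
    (U : ∀ s t : B, s ≤ t → (E t →L[ℝ] F s))
    (hU : HorizontalFamily KE KF U) :
    (⨆ p : {p : B × B // p.1 ≤ p.2}, ENNReal.ofReal ‖U p.1.1 p.1.2 p.2‖)
        = (⨆ t : B, ENNReal.ofReal ‖U t t le_rfl‖) ∧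
      ((∃ C : ℝ, ∀ (s t : B) (h : s ≤ t), ‖U s t h‖ ≤ C) ↔
        (∃ C : ℝ, ∀ t : B, ‖U t t le_rfl‖ ≤ C)) := by
  refine ⟨le_antisymm ?_ ?_, ⟨?_, ?_⟩⟩
  · exact iSup_le fun p => le_iSup_of_le p.1.2 <|
      ENNReal.ofReal_le_ofReal (hU.norm_le_norm_diag p.2)
  · exact iSup_le fun t => le_iSup_of_le (⟨(t, t), le_rfl⟩ : {p : B × B // p.1 ≤ p.2}) le_rfl
  · rintro ⟨C, hC⟩
    exact ⟨C, fun t => hC t t le_rfl⟩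
  · rintro ⟨C, hC⟩
    exact ⟨C, fun s t h => (hU.norm_le_norm_diag h).trans (hC t)⟩

end
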